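/- arXiv:1504.03915 — 4 statements merged into one kernel-verified Lean document; each statement's English description precedes it below -/
import Mathlib

section
/- Let R : Fin d → Fin d → Fin d → ℝ be totally antisymmetric (alternating in its three arguments) and let k₁, …, kₙ be vectors in ℝ^d with k₁ + ⋯ + kₙ = 0. Then the sum over all triples 1 ≤ a < b < c ≤ n of R(k_a, k_b, k_c) (where R is extended trilinearly, R(u,v,w) = Σ_{i,j,l} R i j l · u i · v j · w l) vanishes. -/
open Finset

noncomputable def Tfun (d n : ℕ) (R : Fin d → Fin d → Fin d → ℝ)
    (k : Fin n → Fin d → ℝ) (a b c : Fin n) : ℝ :=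
  ∑ i, ∑ j, ∑ l, R i j l * k a i * k b j * k c l

/-- For a totally antisymmetric array `R` extended trilinearly to `ℝ^d`,
and momenta `k₁,…,kₙ` summing to zero, the sum over all triples `a < b < c` of
`R(k_a, k_b, k_c)` vanishes. -/
theorem sum_triples_antisym_trilinear_eq_zero (d n : ℕ)
    (R : Fin d → Fin d → Fin d → ℝ)
    (hR12 : ∀ i j l, R i j l = - R j i l)
    (hR23 : ∀ i j l, R i j l = - R i l j)
    (k : Fin n → Fin d → ℝ)
    (hk : ∑ a, k a = 0) :
    ∑ a : Fin n, ∑ b : Fin n, ∑ c : Fin n,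
      (if a < b ∧ b < c then ∑ i, ∑ j, ∑ l, R i j l * k a i * k b j * k c l else 0)
      = 0 := by
  set T : Fin n → Fin n → Fin n → ℝ := Tfun d n R k with hT
  have hT12 : ∀ a b c, T a b c = - T b a c := by
    intro a b c
    have h1 : T a b c = ∑ i, ∑ j, ∑ l, -(R j i l * k b j * k a i * k c l) := by
      simp only [hT, Tfun]
      refine Finset.sum_congr rfl fun i _ => Finset.sum_congr rfl fun j _ =>
        Finset.sum_congr rfl fun l _ => ?_
      rw [hR12]; ring
    rw [h1]
    simp only [Finset.sum_neg_distrib, neg_inj]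
    rw [Finset.sum_comm]
    rfl
  have hT23 : ∀ a b c, T a b c = - T a c b := by
    intro a b c
    have h1 : T a b c = ∑ i, ∑ j, ∑ l, -(R i l j * k a i * k c l * k b j) := by
      simp only [hT, Tfun]
      refine Finset.sum_congr rfl fun i _ => Finset.sum_congr rfl fun j _ =>
        Finset.sum_congr rfl fun l _ => ?_
      rw [hR23]; ring
    rw [h1]
    simp only [Finset.sum_neg_distrib, neg_inj]
    refine Finset.sum_congr rfl fun i _ => Finset.sum_comm
  have hcyc : ∀ a b c, T a b c = T c a b := by
    intro a b c
    calc T a b c = -T b a c := hT12 _ _ _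
      _ = T b c a := by rw [hT23 b a c, neg_neg]
      _ = -T c b a := hT12 _ _ _
      _ = T c a b := by rw [hT23 c b a, neg_neg]
  have hzero1 : ∀ a b, T a b b = 0 := by
    intro a b
    have := hT23 a b b
    linarith
  have hzero2 : ∀ a b, T a b a = 0 := by
    intro a b
    have h := hcyc a b a
    have h2 := hT12 a a b
    have h3 := hcyc a a b
    -- T a b a = T a a b (cyc), and T a a b = -T a a b
    nlinarith [hT12 a a b, hcyc a b a]
  -- momentum conservation
  have hTc : ∀ a b : Fin n, ∑ c, T a b c = 0 := by
    intro a b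
    simp only [hT, Tfun]
    rw [Finset.sum_comm]
    refine Finset.sum_eq_zero fun i _ => ?_
    rw [Finset.sum_comm]
    refine Finset.sum_eq_zero fun j _ => ?_
    rw [Finset.sum_comm]
    refine Finset.sum_eq_zero fun l _ => ?_
    have hkl : ∑ c, k c l = 0 := by
      have := congrFun hk l
      simpa using this
    rw [← Finset.mul_sum, hkl, mul_zero]
  show ∑ a : Fin n, ∑ b : Fin n, ∑ c : Fin n,
      (if a < b ∧ b < c then T a b c else 0) = 0
  have comm3 : ∀ f : Fin n → Fin n → Fin n → ℝ,
      ∑ a, ∑ b, ∑ c, f a b c = ∑ c, ∑ a, ∑ b, f a b c := by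
    intro f
    calc ∑ a, ∑ b, ∑ c, f a b c
        = ∑ a, ∑ c, ∑ b, f a b c := Finset.sum_congr rfl fun a _ => Finset.sum_comm
      _ = ∑ c, ∑ a, ∑ b, f a b c := Finset.sum_comm
  have hsplit : ∀ a b c : Fin n,
      (if a < b then T a b c else 0)
        = (if c < a ∧ a < b then T a b c else 0)
          + (if a < c ∧ c < b then T a b c else 0)
          + (if a < b ∧ b < c then T a b c else 0) := by
    intro a b c
    by_cases hab : a < b
    · rcases lt_trichotomy c a with h | h | h
      · simp [hab, h, lt_asymm h, lt_asymm (h.trans hab)]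
      · subst h
        simp [hab, lt_irrefl, lt_asymm hab, hzero2]
      · rcases lt_trichotomy c b with h2 | h2 | h2
        · simp [hab, h, h2, lt_asymm h, lt_asymm h2]
        · subst h2
          simp [hab, h, lt_irrefl, lt_asymm h, hzero1]
        · simp [hab, h, h2, lt_asymm h, lt_asymm h2]
    · have h2 : ¬(a < c ∧ c < b) := fun hh => hab (hh.1.trans hh.2)
      simp [hab, h2]
  have A0 : ∑ a : Fin n, ∑ b : Fin n, ∑ c : Fin n,
      (if a < b then T a b c else 0) = 0 := by
    refine Finset.sum_eq_zero fun a _ => Finset.sum_eq_zero fun b _ => ?_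
    by_cases hab : a < b
    · simp only [hab, if_true]
      exact hTc a b
    · simp [hab]
  have key : (0:ℝ)
      = (∑ a : Fin n, ∑ b : Fin n, ∑ c : Fin n,
          (if c < a ∧ a < b then T a b c else 0))
        + (∑ a : Fin n, ∑ b : Fin n, ∑ c : Fin n,
          (if a < c ∧ c < b then T a b c else 0))
        + (∑ a : Fin n, ∑ b : Fin n, ∑ c : Fin n,
          (if a < b ∧ b < c then T a b c else 0)) := by
    refine A0.symm.trans ?_
    simp only [hsplit, Finset.sum_add_distrib]
  have e1 : (∑ a : Fin n, ∑ b : Fin n, ∑ c : Fin n,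
      (if c < a ∧ a < b then T a b c else 0))
      = ∑ a : Fin n, ∑ b : Fin n, ∑ c : Fin n,
      (if a < b ∧ b < c then T a b c else 0) := by
    rw [comm3]
    refine Finset.sum_congr rfl fun x _ => Finset.sum_congr rfl fun y _ =>
      Finset.sum_congr rfl fun z _ => ?_
    rw [hcyc y z x]
  have e2 : (∑ a : Fin n, ∑ b : Fin n, ∑ c : Fin n,
      (if a < c ∧ c < b then T a b c else 0))
      = -∑ a : Fin n, ∑ b : Fin n, ∑ c : Fin n,
      (if a < b ∧ b < c then T a b c else 0) := by
    have step : ∀ a : Fin n, ∑ b : Fin n, ∑ c : Fin n,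
        (if a < c ∧ c < b then T a b c else 0)
        = ∑ c : Fin n, ∑ b : Fin n, (if a < c ∧ c < b then T a b c else 0) :=
      fun a => Finset.sum_comm
    simp only [step]
    rw [← Finset.sum_neg_distrib]
    refine Finset.sum_congr rfl fun x _ => ?_
    rw [← Finset.sum_neg_distrib]
    refine Finset.sum_congr rfl fun y _ => ?_
    rw [← Finset.sum_neg_distrib]
    refine Finset.sum_congr rfl fun z _ => ?_
    rw [hT23 x z y]
    split <;> simp
  rw [e1, e2] at key
  linarith
end

section
/- Let R be a totally antisymmetric trilinear form on ℝ^d. For vectors k₁,…,kₙ in ℝ^d, the telescoping identity Σ_{c=1}^{n-1} R(k_{n-c+1}, k₁+⋯+k_{n-c}, k_{n-c+2}+⋯+k_n) = − Σ_{1 ≤ a < e < b ≤ n} R(k_a, k_e, k_b) holds. -/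
open Finset

/-- telescoping identity for a totally antisymmetric trilinear form `R`
on `ℝ^d`: `Σ_{c=1}^{n-1} R(k_{n-c+1}, k₁+⋯+k_{n-c}, k_{n-c+2}+⋯+k_n)
= − Σ_{1 ≤ a < e < b ≤ n} R(k_a, k_e, k_b)`. -/
theorem telescoping_trilinear_identity (d n : ℕ)
    (R : (Fin d → ℝ) → (Fin d → ℝ) → (Fin d → ℝ) → ℝ)
    (hadd1 : ∀ u u' v w, R (u + u') v w = R u v w + R u' v w)
    (hadd2 : ∀ u v v' w, R u (v + v') w = R u v w + R u v' w)
    (hadd3 : ∀ u v w w', R u v (w + w') = R u v w + R u v w')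
    (hsmul1 : ∀ (t : ℝ) u v w, R (t • u) v w = t * R u v w)
    (hsmul2 : ∀ (t : ℝ) u v w, R u (t • v) w = t * R u v w)
    (hsmul3 : ∀ (t : ℝ) u v w, R u v (t • w) = t * R u v w)
    (halt12 : ∀ u v w, R u v w = - R v u w)
    (halt23 : ∀ u v w, R u v w = - R u w v)
    (k : ℕ → Fin d → ℝ) :
    ∑ c ∈ Finset.Icc 1 (n - 1),
        R (k (n - c + 1)) (∑ a ∈ Finset.Icc 1 (n - c), k a)
          (∑ b ∈ Finset.Icc (n - c + 2) n, k b)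
      = - ∑ a ∈ Finset.Icc 1 n, ∑ e ∈ Finset.Icc 1 n, ∑ b ∈ Finset.Icc 1 n,
          (if a < e ∧ e < b then R (k a) (k e) (k b) else 0) := by
  have h20 : ∀ u w, R u 0 w = 0 := by
    intro u w
    have := hsmul2 0 u 0 w
    simpa using this
  have h30 : ∀ u v, R u v 0 = 0 := by
    intro u v
    have := hsmul3 0 u v 0
    simpa using this
  have hs2 : ∀ u w (s : Finset ℕ) (f : ℕ → Fin d → ℝ),
      R u (∑ x ∈ s, f x) w = ∑ x ∈ s, R u (f x) w := by
    intro u w s f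
    induction s using Finset.induction_on with
    | empty => simpa using h20 u w
    | insert _ _ h ih => rw [Finset.sum_insert h, Finset.sum_insert h, hadd2, ih]
  have hs3 : ∀ u v (s : Finset ℕ) (f : ℕ → Fin d → ℝ),
      R u v (∑ x ∈ s, f x) = ∑ x ∈ s, R u v (f x) := by
    intro u v s f
    induction s using Finset.induction_on with
    | empty => simpa using h30 u v
    | insert _ _ h ih => rw [Finset.sum_insert h, Finset.sum_insert h, hadd3, ih]
  -- Step 1: reindex the LHS via e = n - c + 1
  have step1 : ∑ c ∈ Finset.Icc 1 (n - 1),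
        R (k (n - c + 1)) (∑ a ∈ Finset.Icc 1 (n - c), k a)
          (∑ b ∈ Finset.Icc (n - c + 2) n, k b)
      = ∑ e ∈ Finset.Icc 2 n, ∑ a ∈ Finset.Icc 1 (e - 1), ∑ b ∈ Finset.Icc (e + 1) n,
          (- R (k a) (k e) (k b)) := by
    refine Finset.sum_nbij' (fun c => n - c + 1) (fun e => n - e + 1) ?_ ?_ ?_ ?_ ?_
    · intro c hc; simp only [Finset.mem_Icc] at *; omega
    · intro e he; simp only [Finset.mem_Icc] at *; omega
    · intro c hc
      simp only [Finset.mem_Icc] at hc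
      show n - (n - c + 1) + 1 = c
      omega
    · intro e he
      simp only [Finset.mem_Icc] at he
      show n - (n - e + 1) + 1 = e
      omega
    · intro c hc
      simp only [Finset.mem_Icc] at hc
      show R (k (n - c + 1)) (∑ a ∈ Finset.Icc 1 (n - c), k a)
          (∑ b ∈ Finset.Icc (n - c + 2) n, k b)
        = ∑ a ∈ Finset.Icc 1 (n - c + 1 - 1), ∑ b ∈ Finset.Icc (n - c + 1 + 1) n,
            (- R (k a) (k (n - c + 1)) (k b))
      have h1 : n - c + 1 - 1 = n - c := by omega
      have h2 : n - c + 1 + 1 = n - c + 2 := by omega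
      rw [h1, h2, hs2]
      refine Finset.sum_congr rfl fun a _ => ?_
      rw [hs3]
      refine Finset.sum_congr rfl fun b _ => ?_
      rw [halt12]
  -- Step 2: rewrite the RHS triple sum
  have step2 : ∑ a ∈ Finset.Icc 1 n, ∑ e ∈ Finset.Icc 1 n, ∑ b ∈ Finset.Icc 1 n,
          (if a < e ∧ e < b then R (k a) (k e) (k b) else 0)
      = ∑ e ∈ Finset.Icc 2 n, ∑ a ∈ Finset.Icc 1 (e - 1), ∑ b ∈ Finset.Icc (e + 1) n,
          R (k a) (k e) (k b) := by
    rw [Finset.sum_comm]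
    -- drop e = 1 (where the inner sum vanishes)
    rw [← Finset.sum_subset (s₁ := Finset.Icc 2 n)
      (fun e he => by simp only [Finset.mem_Icc] at *; omega)
      (fun e he hne => by
        simp only [Finset.mem_Icc] at he hne
        refine Finset.sum_eq_zero fun a ha => Finset.sum_eq_zero fun b hb => ?_
        simp only [Finset.mem_Icc] at ha hb
        have : ¬ (a < e ∧ e < b) := by omega
        simp [this])]
    refine Finset.sum_congr rfl fun e he => ?_
    simp only [Finset.mem_Icc] at he
    -- shrink the a-range
    rw [← Finset.sum_subset (s₁ := Finset.Icc 1 (e - 1))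
      (fun a ha => by simp only [Finset.mem_Icc] at *; omega)
      (fun a ha hna => by
        simp only [Finset.mem_Icc] at ha hna
        refine Finset.sum_eq_zero fun b hb => ?_
        have : ¬ (a < e ∧ e < b) := by omega
        simp [this])]
    refine Finset.sum_congr rfl fun a ha => ?_
    simp only [Finset.mem_Icc] at ha
    -- shrink the b-range
    rw [← Finset.sum_subset (s₁ := Finset.Icc (e + 1) n)
      (fun b hb => by simp only [Finset.mem_Icc] at *; omega)
      (fun b hb hnb => by
        simp only [Finset.mem_Icc] at hb hnb
        have : ¬ (a < e ∧ e < b) := by omega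
        simp [this])]
    refine Finset.sum_congr rfl fun b hb => ?_
    simp only [Finset.mem_Icc] at hb
    have : a < e ∧ e < b := by omega
    simp [this]
  rw [step1, step2]
  simp only [Finset.sum_neg_distrib]
end

section
/- Let U(𝔥) be the universal enveloping algebra of the Lie algebra 𝔥 with [P̃^i, M^j] = (ℓ⁴/6) R^{ijk} P_k and all other brackets zero (R totally antisymmetric), with standard coproduct Δ. Let F' = exp(−½ Σ_i (M^i ⊗ P_i − P_i ⊗ M^i)) and define Δ^{F'}(ξ) = F' Δ(ξ) F'^{−1}. Then Δ^{F'}(P̃^i) = Δ(P̃^i) − (ℓ⁴/6) Σ_{j,k} R^{ijk} P_j ⊗ P_k. -/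
open Finset NormedSpace

lemma pow_mul_comm_of_commutator {W : Type*} [Ring W] (a b c : W)
    (hab : a * b - b * a = c) (hca : c * a = a * c) :
    ∀ n : ℕ, a ^ (n + 1) * b = b * a ^ (n + 1) + (n + 1) • (c * a ^ n) := by
  have hab' : a * b = b * a + c := by rw [← hab]; abel
  intro n
  induction n with
  | zero => simpa using hab'
  | succ n ih =>
    have h2 : a * (c * a ^ n) = c * a ^ (n + 1) := by
      rw [← mul_assoc, ← hca, mul_assoc, ← pow_succ']
    calc a ^ (n + 2) * b = a * (a ^ (n + 1) * b) := by rw [← mul_assoc, ← pow_succ']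
      _ = a * (b * a ^ (n + 1)) + (n + 1) • (a * (c * a ^ n)) := by
          rw [ih, mul_add, mul_smul_comm]
      _ = (b * a + c) * a ^ (n + 1) + (n + 1) • (c * a ^ (n + 1)) := by
          rw [← mul_assoc, hab', h2]
      _ = b * a ^ (n + 2) + (n + 1 + 1) • (c * a ^ (n + 1)) := by
          rw [add_mul, mul_assoc, ← pow_succ', succ_nsmul (c * a ^ (n + 1)) (n + 1),
            add_assoc, add_comm (c * a ^ (n + 1))]

lemma exp_conj_of_central_commutator {W : Type*} [NormedRing W] [NormedAlgebra ℂ W]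
    [CompleteSpace W] (a b c : W) (hab : a * b - b * a = c) (hca : c * a = a * c) :
    NormedSpace.exp a * b * NormedSpace.exp (-a) = b + c := by
  set f : ℕ → W := fun n => (n.factorial⁻¹ : ℂ) • a ^ n with hf
  have hfs : Summable f := expSeries_summable' (𝕂 := ℂ) a
  have hexp : NormedSpace.exp a = ∑' n, f n := by rw [exp_eq_tsum ℂ]
  set g : ℕ → W := fun n => (n.factorial⁻¹ : ℂ) • (b * a ^ n) with hg
  set h : ℕ → W := fun n => Nat.casesOn n 0 (fun m => (m.factorial⁻¹ : ℂ) • (c * a ^ m)) with hh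
  have hgf : g = fun n => b * f n := by
    funext n; simp [hg, hf, mul_smul_comm]
  have hhf : ∀ n, h (n + 1) = c * f n := by
    intro n; simp [hh, hf, mul_smul_comm]
  have hgs : Summable g := by rw [hgf]; exact hfs.mul_left b
  have hhs : Summable h := by
    refine (summable_nat_add_iff 1).mp ?_
    simpa only [hhf] using hfs.mul_left c
  have key : ∀ n, f n * b = g n + h n := by
    intro n
    cases n with
    | zero => simp [hf, hg, hh]
    | succ m =>
      simp only [hf, hg, hhf, smul_mul_assoc,
        pow_mul_comm_of_commutator a b c hab hca m, smul_add]
      congr 1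
      rw [← Nat.cast_smul_eq_nsmul ℂ, smul_smul, mul_smul_comm]
      congr 1
      have hm : ((m.factorial : ℂ)) ≠ 0 := Nat.cast_ne_zero.mpr m.factorial_ne_zero
      have hm1 : (((m+1).factorial : ℂ)) ≠ 0 := Nat.cast_ne_zero.mpr (m+1).factorial_ne_zero
      field_simp
      rw [Nat.factorial_succ]
      push_cast
      ring
  have h1 : NormedSpace.exp a * b = b * NormedSpace.exp a + c * NormedSpace.exp a := by
    calc NormedSpace.exp a * b = ∑' n, f n * b := by rw [hexp, hfs.tsum_mul_right]
      _ = ∑' n, (g n + h n) := by simp only [key]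
      _ = (∑' n, g n) + ∑' n, h n := Summable.tsum_add hgs hhs
      _ = b * NormedSpace.exp a + c * NormedSpace.exp a := by
          rw [hgf, hfs.tsum_mul_left, Summable.tsum_eq_zero_add hhs]
          simp only [hhf]
          rw [hfs.tsum_mul_left, ← hexp]
          simp [hh]
  have hinv : NormedSpace.exp a * NormedSpace.exp (-a) = 1 := by
    rw [← exp_add_of_commute_of_mem_ball (𝕂 := ℂ) ((Commute.refl a).neg_right)
      ((expSeries_radius_eq_top ℂ W).symm ▸ edist_lt_top _ _)
      ((expSeries_radius_eq_top ℂ W).symm ▸ edist_lt_top _ _), add_neg_cancel, exp_zero]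
  calc NormedSpace.exp a * b * NormedSpace.exp (-a)
      = b * (NormedSpace.exp a * NormedSpace.exp (-a)) + c * (NormedSpace.exp a * NormedSpace.exp (-a)) := by
        rw [h1, add_mul, mul_assoc, mul_assoc]
    _ = b + c := by rw [hinv, mul_one, mul_one]

/-- in (a completion of) `U(𝔥) ⊗ U(𝔥)`, modelled by a complete normed
`ℂ`-algebra `W` with first-leg generators `p1 i = P_i⊗1`, `pt1 i = P̃^i⊗1`, `m1 i = M^i⊗1`
and second-leg generators `p2, pt2, m2` (legs commute, `P` is central, and each leg obeys
`[P̃^i, M^j] = (ℓ⁴/6) Σ_k R^{ijk} P_k` with all other brackets zero), the twisted coproduct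
`Δ^{F'}(P̃^i) = F' Δ(P̃^i) F'⁻¹`, with `F' = exp(−½ Σ_l (M^l⊗P_l − P_l⊗M^l))` and
`Δ(P̃^i) = P̃^i⊗1 + 1⊗P̃^i`, equals `Δ(P̃^i) − (ℓ⁴/6) Σ_{j,k} R^{ijk} P_j ⊗ P_k`. -/
theorem twisted_coproduct_of_Pt (d : ℕ) (ℓ : ℝ) (R : Fin d → Fin d → Fin d → ℝ)
    (hR12 : ∀ i j l, R i j l = - R j i l)
    (hR23 : ∀ i j l, R i j l = - R i l j)
    {W : Type*} [NormedRing W] [NormedAlgebra ℂ W] [CompleteSpace W]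
    (p1 pt1 m1 p2 pt2 m2 : Fin d → W)
    (hPcentral1 : ∀ i (w : W), Commute (p1 i) w)
    (hPcentral2 : ∀ i (w : W), Commute (p2 i) w)
    (hbr1 : ∀ i j, pt1 i * m1 j - m1 j * pt1 i
      = ((ℓ : ℂ) ^ 4 / 6) • ∑ k, (R i j k : ℂ) • p1 k)
    (hbr2 : ∀ i j, pt2 i * m2 j - m2 j * pt2 i
      = ((ℓ : ℂ) ^ 4 / 6) • ∑ k, (R i j k : ℂ) • p2 k)
    (hc1 : ∀ i j, Commute (pt1 i) (m2 j))
    (hc2 : ∀ i j, Commute (m1 i) (pt2 j))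
    (hc3 : ∀ i j, Commute (m1 i) (m2 j))
    (hc4 : ∀ i j, Commute (pt1 i) (pt2 j))
    (hmm1 : ∀ i j, Commute (m1 i) (m1 j))
    (hmm2 : ∀ i j, Commute (m2 i) (m2 j))
    (htt1 : ∀ i j, Commute (pt1 i) (pt1 j))
    (htt2 : ∀ i j, Commute (pt2 i) (pt2 j)) :
    ∀ i, NormedSpace.exp ((-(1 / 2 : ℂ)) • ∑ l, (m1 l * p2 l - p1 l * m2 l)) *
          (pt1 i + pt2 i) *
          NormedSpace.exp ((1 / 2 : ℂ) • ∑ l, (m1 l * p2 l - p1 l * m2 l))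
        = (pt1 i + pt2 i)
          - ((ℓ : ℂ) ^ 4 / 6) • ∑ j, ∑ k, (R i j k : ℂ) • (p1 j * p2 k) := by
  intro i
  set s : ℂ := (ℓ : ℂ) ^ 4 / 6 with hs
  set S : W := ∑ l, (m1 l * p2 l - p1 l * m2 l) with hS
  set b : W := pt1 i + pt2 i with hb
  set C : W := ∑ j, ∑ k, (R i j k : ℂ) • (p1 j * p2 k) with hC
  -- centrality of C
  have hCc : ∀ w : W, Commute (s • C) w := by
    intro w
    refine Commute.smul_left ?_ _
    refine Commute.sum_left _ _ _ fun j _ => Commute.sum_left _ _ _ fun k _ => ?_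
    exact Commute.smul_left ((hPcentral1 j w).mul_left (hPcentral2 k w)) _
  -- pointwise commutator
  have keyl : ∀ l : Fin d,
      b * (m1 l * p2 l - p1 l * m2 l) - (m1 l * p2 l - p1 l * m2 l) * b
      = s • ((∑ k, (R i l k : ℂ) • p1 k) * p2 l)
        - s • (p1 l * ∑ k, (R i l k : ℂ) • p2 k) := by
    intro l
    have e1 : m1 l * p2 l * pt1 i = m1 l * pt1 i * p2 l := by
      rw [mul_assoc, (hPcentral2 l (pt1 i)).eq, ← mul_assoc]
    have e2 : m1 l * p2 l * pt2 i = pt2 i * (m1 l * p2 l) := by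
      rw [mul_assoc, (hPcentral2 l (pt2 i)).eq, ← mul_assoc, (hc2 l i).eq, mul_assoc]
    have e3 : pt1 i * (p1 l * m2 l) = p1 l * m2 l * pt1 i := by
      rw [← mul_assoc, ← (hPcentral1 l (pt1 i)).eq, mul_assoc, (hc1 i l).eq, ← mul_assoc]
    have e4 : pt2 i * (p1 l * m2 l) = p1 l * (pt2 i * m2 l) := by
      rw [← mul_assoc, ← (hPcentral1 l (pt2 i)).eq, mul_assoc]
    have hL : b * (m1 l * p2 l - p1 l * m2 l) - (m1 l * p2 l - p1 l * m2 l) * b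
        = (pt1 i * m1 l - m1 l * pt1 i) * p2 l
          - p1 l * (pt2 i * m2 l - m2 l * pt2 i) := by
      rw [hb]
      simp only [add_mul, mul_add, sub_mul, mul_sub]
      rw [e1, e2, e3, e4]
      noncomm_ring
    rw [hL, hbr1 i l, hbr2 i l, smul_mul_assoc, mul_smul_comm]
  -- index gymnastics
  have hT1 : (∑ l, (∑ k, (R i l k : ℂ) • p1 k) * p2 l) = -C := by
    calc ∑ l, (∑ k, (R i l k : ℂ) • p1 k) * p2 l
        = ∑ l, ∑ k, (R i l k : ℂ) • (p1 k * p2 l) := by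
          simp [Finset.sum_mul, smul_mul_assoc]
      _ = ∑ k, ∑ l, (R i l k : ℂ) • (p1 k * p2 l) := Finset.sum_comm
      _ = -C := by
          rw [hC, ← Finset.sum_neg_distrib]
          refine Finset.sum_congr rfl fun j _ => ?_
          rw [← Finset.sum_neg_distrib]
          refine Finset.sum_congr rfl fun k _ => ?_
          rw [hR23 i j k]
          push_cast
          rw [neg_smul, neg_neg]
  have hT2 : (∑ l, p1 l * ∑ k, (R i l k : ℂ) • p2 k) = C := by
    rw [hC]
    refine Finset.sum_congr rfl fun j _ => ?_
    rw [Finset.mul_sum]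
    exact Finset.sum_congr rfl fun k _ => (mul_smul_comm _ _ _)
  -- the full commutator
  have hBS : b * S - S * b = -(s • C) - s • C := by
    rw [hS, Finset.mul_sum, Finset.sum_mul, ← Finset.sum_sub_distrib]
    rw [Finset.sum_congr rfl fun l _ => keyl l]
    rw [Finset.sum_sub_distrib, ← Finset.smul_sum, ← Finset.smul_sum, hT1, hT2, smul_neg]
  have hSb : S * b - b * S = s • C + s • C := by
    rw [← neg_sub (b * S), hBS]; abel
  have hab : ((-(1 / 2 : ℂ)) • S) * b - b * ((-(1 / 2 : ℂ)) • S) = -(s • C) := by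
    rw [smul_mul_assoc, mul_smul_comm, ← smul_sub, hSb]
    module
  have main := exp_conj_of_central_commutator ((-(1 / 2 : ℂ)) • S) b (-(s • C)) hab
    (((hCc ((-(1 / 2 : ℂ)) • S)).neg_left).eq)
  have hhalf : (1 / 2 : ℂ) • S = -((-(1 / 2 : ℂ)) • S) := by rw [neg_smul, neg_neg]
  rw [hhalf, main, ← sub_eq_add_neg]
end

section
/- Let A be an associative algebra over ℂ and F, F' invertible elements of (a completion of) A ⊗ A satisfying: (i) F F' = F' F; (ii) F satisfies the 2-cocycle condition (F⊗1)(Δ⊗id)F = (1⊗F)(id⊗Δ)F for a coassociative algebra map Δ : A → A⊗A; and (iii) (1⊗F')((id⊗Δ)F) = Φ₀ · ((id⊗Δ)F)(1⊗F') where Φ₀ is central in A⊗A⊗A with (F'⊗1)((Δ⊗id)F) = Φ₀⁻¹ ((Δ⊗id)F)(F'⊗1). If F' also satisfies the 2-cocycle condition, then the combined twist 𝓕 = F F' satisfies (Δ⊗id)𝓕⁻¹ · (𝓕⁻¹⊗1) = (id⊗Δ)𝓕⁻¹ · (1⊗𝓕⁻¹) · Φ₀², i.e., 𝓕 fails the cocycle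 condition exactly by the central associator Φ = Φ₀². -/
/-- abstract cochain twist computation.  `A2` and `A3` model (completions
of) `A⊗A` and `A⊗A⊗A`; `ι12, ι23 : A2 → A3` are the insertions `x⊗y ↦ x⊗y⊗1` and
`x⊗y ↦ 1⊗x⊗y`, and `D1 = Δ⊗id`, `D2 = id⊗Δ` for a coassociative coproduct `Δ`.
Given invertible `F, F'` with (i) `F F' = F' F`, (ii) the 2-cocycle condition for `F`
(and also for `F'`), and (iii) `(1⊗F')((id⊗Δ)F) = Φ₀ ((id⊗Δ)F)(1⊗F')` and
`(F'⊗1)((Δ⊗id)F) = Φ₀⁻¹ ((Δ⊗id)F)(F'⊗1)` with `Φ₀` central and invertible, the combined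
twist `𝓕 = F F'` fails the cocycle condition exactly by the associator `Φ = Φ₀²`:
`(Δ⊗id)𝓕⁻¹ · (𝓕⁻¹⊗1) = (id⊗Δ)𝓕⁻¹ · (1⊗𝓕⁻¹) · Φ₀²`. -/
theorem combined_twist_cocycle_failure
    {A2 A3 : Type*} [Ring A2] [Ring A3]
    (ι12 ι23 D1 D2 : A2 →+* A3)
    (F Fi F' F'i : A2) (Φ₀ Φ₀i : A3)
    (hF : F * Fi = 1 ∧ Fi * F = 1)
    (hF' : F' * F'i = 1 ∧ F'i * F' = 1)
    (hΦ : Φ₀ * Φ₀i = 1 ∧ Φ₀i * Φ₀ = 1)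
    (hΦcentral : ∀ w : A3, Commute Φ₀ w)
    (hcommFF' : F * F' = F' * F)
    (hcocycleF : ι12 F * D1 F = ι23 F * D2 F)
    (hcocycleF' : ι12 F' * D1 F' = ι23 F' * D2 F')
    (hiii : ι23 F' * D2 F = Φ₀ * (D2 F * ι23 F'))
    (hiii' : ι12 F' * D1 F = Φ₀i * (D1 F * ι12 F')) :
    D1 (Fi * F'i) * ι12 (Fi * F'i)
      = D2 (Fi * F'i) * ι23 (Fi * F'i) * (Φ₀ * Φ₀) := by
  obtain ⟨hF1, hF2⟩ := hF
  obtain ⟨hF'1, hF'2⟩ := hF'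
  obtain ⟨hΦ1, hΦ2⟩ := hΦ
  set G := F * F' with hGdef
  set Gi := Fi * F'i with hGidef
  have hG1 : G * Gi = 1 := by
    rw [hcommFF', hGidef, mul_assoc, ← mul_assoc F Fi, hF1, one_mul, hF'1]
  have hG2 : Gi * G = 1 := by
    rw [hcommFF', hGidef, mul_assoc, ← mul_assoc F'i, hF'2, one_mul, hF2]
  -- centrality of Φ₀i
  have hcent : ∀ w : A3, Φ₀i * w = w * Φ₀i := by
    intro w
    calc Φ₀i * w = Φ₀i * w * (Φ₀ * Φ₀i) := by rw [hΦ1, mul_one]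
    _ = Φ₀i * (w * Φ₀) * Φ₀i := by rw [mul_assoc, mul_assoc, mul_assoc]
    _ = Φ₀i * (Φ₀ * w) * Φ₀i := by rw [← (hΦcentral w).eq]
    _ = w * Φ₀i := by rw [← mul_assoc, hΦ2, one_mul]
  have hcent' : ∀ a y : A3, a * (Φ₀i * y) = Φ₀i * (a * y) := by
    intro a y
    rw [← mul_assoc, ← hcent, mul_assoc]
  have hA : ∀ x : A3, ι12 F' * (D1 F * x) = Φ₀i * (D1 F * (ι12 F' * x)) := by
    intro x
    rw [← mul_assoc, hiii', mul_assoc, mul_assoc]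
  have hB : ∀ x : A3, D2 F * (ι23 F' * x) = Φ₀i * (ι23 F' * (D2 F * x)) := by
    intro x
    have h2 : D2 F * ι23 F' = Φ₀i * (ι23 F' * D2 F) := by
      rw [hiii, ← mul_assoc, hΦ2, one_mul]
    rw [← mul_assoc, h2, mul_assoc, mul_assoc]
  have hC : ∀ x : A3, ι12 F * (D1 F * x) = ι23 F * (D2 F * x) := by
    intro x
    rw [← mul_assoc, hcocycleF, mul_assoc]
  -- forward identity
  have hL : ι12 G * D1 G = Φ₀i * (Φ₀i * (ι23 G * D2 G)) := by
    have e1 : ι12 G * D1 G = ι12 F * (ι12 F' * (D1 F * D1 F')) := by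
      rw [hGdef, map_mul, map_mul, mul_assoc]
    have e2 : ι23 G * D2 G = ι23 F * (ι23 F' * (D2 F * D2 F')) := by
      rw [hGdef, map_mul, map_mul, mul_assoc]
    rw [e1, e2, hA, hcent', hC, hcocycleF', hB, hcent']
  -- LHS is a two-sided inverse of ι12 G * D1 G
  have hLi1 : (D1 Gi * ι12 Gi) * (ι12 G * D1 G) = 1 := by
    calc (D1 Gi * ι12 Gi) * (ι12 G * D1 G)
        = D1 Gi * (ι12 Gi * ι12 G) * D1 G := by
          rw [mul_assoc, mul_assoc, mul_assoc]
      _ = D1 Gi * D1 G := by rw [← map_mul, hG2, map_one, mul_one]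
      _ = 1 := by rw [← map_mul, hG2, map_one]
  have hLi2 : (ι12 G * D1 G) * (D1 Gi * ι12 Gi) = 1 := by
    calc (ι12 G * D1 G) * (D1 Gi * ι12 Gi)
        = ι12 G * (D1 G * D1 Gi) * ι12 Gi := by
          rw [mul_assoc, mul_assoc, mul_assoc]
      _ = ι12 G * ι12 Gi := by rw [← map_mul, hG1, map_one, mul_one]
      _ = 1 := by rw [← map_mul, hG1, map_one]
  -- RHS is also a left inverse of ι12 G * D1 G
  have hRi : (D2 Gi * ι23 Gi * (Φ₀ * Φ₀)) * (ι12 G * D1 G) = 1 := by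
    rw [hL]
    calc (D2 Gi * ι23 Gi * (Φ₀ * Φ₀)) * (Φ₀i * (Φ₀i * (ι23 G * D2 G)))
        = D2 Gi * ι23 Gi * (Φ₀ * (Φ₀ * Φ₀i) * (Φ₀i * (ι23 G * D2 G))) := by
          simp only [mul_assoc]
      _ = D2 Gi * ι23 Gi * (Φ₀ * (Φ₀i * (ι23 G * D2 G))) := by
          rw [hΦ1, mul_one]
      _ = D2 Gi * ι23 Gi * (ι23 G * D2 G) := by
          rw [← mul_assoc Φ₀, hΦ1, one_mul]
      _ = D2 Gi * (ι23 Gi * ι23 G) * D2 G := by simp only [mul_assoc]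
      _ = 1 := by rw [← map_mul, hG2, map_one, mul_one, ← map_mul, hG2, map_one]
  have : D2 Gi * ι23 Gi * (Φ₀ * Φ₀) = D1 Gi * ι12 Gi := by
    calc D2 Gi * ι23 Gi * (Φ₀ * Φ₀)
        = (D2 Gi * ι23 Gi * (Φ₀ * Φ₀)) * ((ι12 G * D1 G) * (D1 Gi * ι12 Gi)) := by
          rw [hLi2, mul_one]
      _ = ((D2 Gi * ι23 Gi * (Φ₀ * Φ₀)) * (ι12 G * D1 G)) * (D1 Gi * ι12 Gi) := by
          simp only [mul_assoc]
      _ = D1 Gi * ι12 Gi := by rw [hRi, one_mul]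
  exact this.symm
end
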